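/- Let k be a field, R a k-algebra, A an R-algebra, and k̄ an algebraic closure of k. Suppose A ⊗_k k̄ is a polynomial ring in two variables X, Y over R ⊗_k k̄. If X = Σ a_i ⊗ λ_i and Y = Σ b_j ⊗ μ_j with a_i, b_j ∈ A and λ_i, μ_j ∈ k̄, then A = R[a_1, ..., a_n, b_1, ..., b_m]; in particular A is a finitely generated R-algebra. -/
import Mathlib

open TensorProduct

lemma aux_tmul_one_eq_zero
    (k : Type*) [Field k] (K : Type*) [Field K] [Algebra k K]
    (N : Type*) [AddCommGroup N] [Module k N] (y : N)
    (h : y ⊗ₜ[k] (1 : K) = 0) : y = 0 := by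
  have hf : LinearMap.ker (Algebra.linearMap k K) = ⊥ := by
    rw [LinearMap.ker_eq_bot]
    intro x y hxy
    exact (algebraMap k K).injective hxy
  obtain ⟨φ, hφ⟩ := (Algebra.linearMap k K).exists_leftInverse_of_injective hf
  have hφ1 : φ 1 = 1 := by
    have := LinearMap.congr_fun hφ 1
    simpa using this
  have := congrArg ((TensorProduct.rid k N).toLinearMap ∘ₗ LinearMap.lTensor N φ) h
  simpa [hφ1] using this

/-- The natural algebra structure of `R ⊗[k] K` on `A ⊗[k] K` induced by `R → A`. -/
noncomputable local instance tensorBaseAlgebra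
    (k : Type*) [CommRing k] (R : Type*) [CommRing R] [Algebra k R]
    (A : Type*) [CommRing A] [Algebra k A] [Algebra R A] [IsScalarTower k R A]
    (K : Type*) [CommRing K] [Algebra k K] :
    Algebra (R ⊗[k] K) (A ⊗[k] K) :=
  (Algebra.TensorProduct.map (IsScalarTower.toAlgHom k R A) (AlgHom.id k K)).toRingHom.toAlgebra

set_option maxHeartbeats 1600000
set_option synthInstance.maxHeartbeats 400000

/-- Let `k` be a field, `R` a `k`-algebra, `A` an `R`-algebra and `k̄` an
algebraic closure of `k`.  Suppose `A ⊗[k] k̄` is a polynomial ring in two variables `X, Y`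
over `R ⊗[k] k̄`.  If `X = Σ aᵢ ⊗ λᵢ` and `Y = Σ bⱼ ⊗ μⱼ` with `aᵢ, bⱼ ∈ A` and
`λᵢ, μⱼ ∈ k̄`, then `A = R[a₁, …, aₙ, b₁, …, bₘ]`; in particular `A` is a finitely
generated `R`-algebra. -/
theorem form_generators
    (k : Type*) [Field k] (R : Type*) [CommRing R] [Algebra k R]
    (A : Type*) [CommRing A] [Algebra k A] [Algebra R A] [IsScalarTower k R A]
    (K : Type*) [Field K] [Algebra k K] [IsAlgClosure k K]
    (n m : ℕ) (a : Fin n → A) (lam : Fin n → K) (b : Fin m → A) (mu : Fin m → K)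
    (e : MvPolynomial (Fin 2) (R ⊗[k] K) ≃ₐ[R ⊗[k] K] (A ⊗[k] K))
    (hX : e (MvPolynomial.X 0) = ∑ i, a i ⊗ₜ[k] lam i)
    (hY : e (MvPolynomial.X 1) = ∑ j, b j ⊗ₜ[k] mu j) :
    Algebra.adjoin R (Set.range a ∪ Set.range b) = ⊤ ∧ Algebra.FiniteType R A := by
  set S : Subalgebra R A := Algebra.adjoin R (Set.range a ∪ Set.range b) with hS
  set S' : Subalgebra k A := Subalgebra.restrictScalars k S with hS'
  set g : (↥S' ⊗[k] K) →ₐ[k] (A ⊗[k] K) :=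
    Algebra.TensorProduct.map S'.val (AlgHom.id k K) with hg
  have ha : ∀ i, a i ∈ S' := fun i =>
    (Subalgebra.mem_restrictScalars k).mpr
      (Algebra.subset_adjoin (Set.mem_union_left _ ⟨i, rfl⟩))
  have hb : ∀ j, b j ∈ S' := fun j =>
    (Subalgebra.mem_restrictScalars k).mpr
      (Algebra.subset_adjoin (Set.mem_union_right _ ⟨j, rfl⟩))
  -- Step A : g is surjective
  have hXr : e (MvPolynomial.X 0) ∈ g.range := by
    rw [hX]
    exact ⟨∑ i, (⟨a i, ha i⟩ : ↥S') ⊗ₜ[k] lam i, by simp [hg]⟩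
  have hYr : e (MvPolynomial.X 1) ∈ g.range := by
    rw [hY]
    exact ⟨∑ j, (⟨b j, hb j⟩ : ↥S') ⊗ₜ[k] mu j, by simp [hg]⟩
  have hbase : ∀ c : R ⊗[k] K,
      (Algebra.TensorProduct.map (IsScalarTower.toAlgHom k R A) (AlgHom.id k K)) c
        ∈ g.range := by
    intro c
    induction c using TensorProduct.induction_on with
    | zero => simpa using g.range.zero_mem
    | tmul r lamr =>
      refine ⟨(⟨algebraMap R A r, (Subalgebra.mem_restrictScalars k).mpr
        (S.algebraMap_mem r)⟩ : ↥S') ⊗ₜ[k] lamr, ?_⟩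
      simp [hg]
    | add x y hx hy =>
      rw [map_add]
      exact g.range.add_mem hx hy
  have hsurj : ∀ z : A ⊗[k] K, z ∈ g.range := by
    intro z
    have hz : e (e.symm z) = z := e.apply_symm_apply z
    rw [← hz]
    induction e.symm z using MvPolynomial.induction_on with
    | C c =>
      have hec : e (MvPolynomial.C c) = algebraMap (R ⊗[k] K) (A ⊗[k] K) c := by
        simpa using e.commutes c
      rw [hec]
      exact hbase c
    | add p q hp hq =>
      rw [map_add]
      exact g.range.add_mem hp hq
    | mul_X p i hp =>
      rw [map_mul]
      refine g.range.mul_mem hp ?_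
      fin_cases i
      · exact hXr
      · exact hYr
  -- Step B : conclude x ∈ S for all x
  have hmem : ∀ x : A, x ∈ S := by
    intro x
    obtain ⟨w, hw⟩ := hsurj (x ⊗ₜ[k] 1)
    set M : Submodule k A := Subalgebra.toSubmodule S' with hM
    set q : A →ₗ[k] (A ⧸ M) := M.mkQ with hq
    have hq0 : ∀ w : ↥S' ⊗[k] K, (LinearMap.rTensor K q) (g w) = 0 := by
      intro w
      induction w using TensorProduct.induction_on with
      | zero => simp
      | tmul s lams =>
        have hgs : g (s ⊗ₜ[k] lams) = (s : A) ⊗ₜ[k] lams := by simp [hg]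
        rw [hgs]
        have hqs : q (s : A) = 0 := by
          simp [hq, (Submodule.Quotient.mk_eq_zero M).mpr s.2]
        simp [LinearMap.rTensor_tmul, hqs]
      | add x y hx hy =>
        rw [map_add, map_add, hx, hy, add_zero]
    have h0 : q x ⊗ₜ[k] (1 : K) = 0 := by
      have h1 := hq0 w
      rw [show g w = x ⊗ₜ[k] 1 from hw] at h1
      simpa [LinearMap.rTensor_tmul] using h1
    have hqx : q x = 0 := aux_tmul_one_eq_zero k K (A ⧸ M) (q x) h0
    have : x ∈ M := by
      rwa [hq, Submodule.mkQ_apply, Submodule.Quotient.mk_eq_zero] at hqx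
    exact this
  have htop : S = ⊤ := by
    rw [eq_top_iff]
    intro x _
    exact hmem x
  refine ⟨htop, ?_⟩
  exact ⟨((Set.finite_range a).union (Set.finite_range b)).toFinset, by
    rwa [Set.Finite.coe_toFinset]⟩
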